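/- Let A ⊆ ℝ^n and B ⊆ ℝ^m be nonempty compact convex sets and let f : ℝ^n × ℝ^m → ℝ be bilinear. Then max over a in A of min over b in B of f(a,b) equals min over b in B of max over a in A of f(a,b). -/

import Mathlib

open Set Finset


/-- Bilinear minimax theorem (special case of Sion): for nonempty compact convex
`A ⊆ ℝⁿ`, `B ⊆ ℝᵐ` and bilinear `f`, `max_{a∈A} min_{b∈B} f(a,b) = min_{b∈B} max_{a∈A} f(a,b)`. -/
theorem bilinear_minimax {n m : ℕ}
    (A : Set (Fin n → ℝ)) (B : Set (Fin m → ℝ))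
    (hAne : A.Nonempty) (hAcp : IsCompact A) (hAcv : Convex ℝ A)
    (hBne : B.Nonempty) (hBcp : IsCompact B) (hBcv : Convex ℝ B)
    (f : (Fin n → ℝ) → (Fin m → ℝ) → ℝ)
    (hf₁ : ∀ b, IsLinearMap ℝ fun a => f a b)
    (hf₂ : ∀ a, IsLinearMap ℝ fun b => f a b) :
    sSup ((fun a => sInf ((fun b => f a b) '' B)) '' A)
      = sInf ((fun b => sSup ((fun a => f a b) '' A)) '' B) := by
  classical
  have contA : ∀ b, Continuous fun a => f a b := fun b =>
    (IsLinearMap.mk' _ (hf₁ b)).continuous_of_finiteDimensional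
  have contB : ∀ a, Continuous fun b => f a b := fun a =>
    (IsLinearMap.mk' _ (hf₂ a)).continuous_of_finiteDimensional
  set Φ := fun a => sInf ((fun b => f a b) '' B) with hΦdef
  set Ψ := fun b => sSup ((fun a => f a b) '' A) with hΨdef
  obtain ⟨a₀, ha₀⟩ := hAne
  obtain ⟨b₀, hb₀⟩ := hBne
  have hAne' : A.Nonempty := ⟨a₀, ha₀⟩
  have hBne' : B.Nonempty := ⟨b₀, hb₀⟩
  have hBimg : ∀ a, IsCompact ((fun b => f a b) '' B) := fun a => hBcp.image (contB a)
  have hAimg : ∀ b, IsCompact ((fun a => f a b) '' A) := fun b => hAcp.image (contA b)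
  have hΦ_le : ∀ a ∈ A, ∀ b ∈ B, Φ a ≤ f a b := fun a _ b hb =>
    csInf_le (hBimg a).bddBelow ⟨b, hb, rfl⟩
  have hle_Ψ : ∀ a ∈ A, ∀ b ∈ B, f a b ≤ Ψ b := fun a ha b _ =>
    le_csSup (hAimg b).bddAbove ⟨a, ha, rfl⟩
  have hΦΨ : ∀ a ∈ A, ∀ b ∈ B, Φ a ≤ Ψ b := fun a ha b hb =>
    (hΦ_le a ha b hb).trans (hle_Ψ a ha b hb)
  have hbddA : BddAbove (Φ '' A) := ⟨Ψ b₀, by rintro _ ⟨a, ha, rfl⟩; exact hΦΨ a ha b₀ hb₀⟩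
  have hbddB : BddBelow (Ψ '' B) := ⟨Φ a₀, by rintro _ ⟨b, hb, rfl⟩; exact hΦΨ a₀ ha₀ b hb⟩
  have easy : sSup (Φ '' A) ≤ sInf (Ψ '' B) := by
    apply csSup_le (hAne'.image _)
    rintro _ ⟨a, ha, rfl⟩
    apply le_csInf (hBne'.image _)
    rintro _ ⟨b, hb, rfl⟩
    exact hΦΨ a ha b hb
  refine le_antisymm easy (le_of_forall_lt fun c hc => ?_)
  obtain ⟨c', hc1, hc2⟩ := exists_between hc
  have key : (A ∩ ⋂ b : B, {a | c' ≤ f a (b : Fin m → ℝ)}).Nonempty := by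
    by_contra hemp
    rw [Set.not_nonempty_iff_eq_empty] at hemp
    obtain ⟨u, hu⟩ := hAcp.elim_finite_subfamily_closed _
      (fun b : B => isClosed_le continuous_const (contA (b : Fin m → ℝ))) hemp
    set bi : ↥u → (Fin m → ℝ) := fun i => ((i : ↥B) : Fin m → ℝ) with hbi
    set Gmap : (Fin n → ℝ) →ₗ[ℝ] (↥u → ℝ) :=
      LinearMap.pi (fun i : ↥u => IsLinearMap.mk' _ (hf₁ (bi i))) with hGmap
    have hGapp : ∀ a i, Gmap a i = f a (bi i) := fun a i => rfl
    have hKcp : IsCompact (⇑Gmap '' A) := hAcp.image Gmap.continuous_of_finiteDimensional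
    have hKcv : Convex ℝ (⇑Gmap '' A) := hAcv.linear_image Gmap
    have hCcv : Convex ℝ {y : ↥u → ℝ | ∀ i, c' ≤ y i} := by
      intro y hy z hz α β hα hβ hαβ i
      have h1 := hy i
      have h2 := hz i
      simp only [Pi.add_apply, Pi.smul_apply, smul_eq_mul]
      have h3 : α * c' + β * c' = c' := by rw [← add_mul, hαβ, one_mul]
      linarith [mul_le_mul_of_nonneg_left h1 hα, mul_le_mul_of_nonneg_left h2 hβ]
    have hCcl : IsClosed {y : ↥u → ℝ | ∀ i, c' ≤ y i} := by
      have : {y : ↥u → ℝ | ∀ i, c' ≤ y i} = ⋂ i, {y : ↥u → ℝ | c' ≤ y i} := by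
        ext y; simp [Set.mem_iInter]
      rw [this]
      exact isClosed_iInter fun i => isClosed_le continuous_const (continuous_apply i)
    have hdisj : Disjoint (⇑Gmap '' A) {y : ↥u → ℝ | ∀ i, c' ≤ y i} := by
      rw [Set.disjoint_left]
      rintro _ ⟨a, ha, rfl⟩ hCmem
      have hmem : a ∈ A ∩ ⋂ b ∈ u, {a | c' ≤ f a ((b : ↥B) : Fin m → ℝ)} := by
        refine ⟨ha, ?_⟩
        simp only [Set.mem_iInter]
        intro b hb
        exact hCmem (⟨b, hb⟩ : ↥u)
      rw [hu] at hmem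
      exact hmem
    obtain ⟨φ, s, t, hφK, hφst, hφC⟩ :=
      geometric_hahn_banach_compact_closed hKcv hKcp hCcv hCcl hdisj
    obtain ⟨μ, hφ_eq⟩ : ∃ μ : ↥u → ℝ, ∀ y : ↥u → ℝ, φ y = ∑ i, y i * μ i := by
      refine ⟨fun i => φ (fun j => if i = j then 1 else 0), fun y => ?_⟩
      conv_lhs => rw [pi_eq_sum_univ y]
      rw [map_sum]
      simp [smul_eq_mul]
    have hbase : t < ∑ j, c' * μ j := by
      have h := hφC (fun _ => c') (fun j => le_refl c')
      rwa [hφ_eq] at h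
    have hμ0 : ∀ i, 0 ≤ μ i := by
      intro i
      by_contra hneg
      push_neg at hneg
      have hμpos : 0 < -μ i := by linarith
      obtain ⟨R, hR0, hRe⟩ : ∃ R : ℝ, 0 ≤ R ∧ R * μ i = (t - ∑ j, c' * μ j) + μ i := by
        refine ⟨((∑ j, c' * μ j) - t) / (-μ i) + 1, ?_, ?_⟩
        · have h4 : 0 ≤ ((∑ j, c' * μ j) - t) / (-μ i) :=
            div_nonneg (by linarith) hμpos.le
          linarith
        · field_simp [hneg.ne]
          ring
      have hyC : (fun j => c' + if i = j then R else 0) ∈ {y : ↥u → ℝ | ∀ i, c' ≤ y i} := by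
        intro j
        dsimp only
        by_cases hij : i = j <;> simp [hij] <;> linarith
      have hval := hφC _ hyC
      rw [hφ_eq] at hval
      have hsum : ∑ j, (c' + if i = j then R else 0) * μ j
          = (∑ j, c' * μ j) + R * μ i := by
        simp [add_mul, Finset.sum_add_distrib, ite_mul, Finset.sum_ite_eq]
      rw [hsum] at hval
      linarith
    have hσ0 : 0 < ∑ i, μ i := by
      rcases (Finset.sum_nonneg fun i (_ : i ∈ Finset.univ) => hμ0 i).lt_or_eq with h | h
      · exact h
      · exfalso
        have hall : ∀ i, μ i = 0 := fun i =>
          (Finset.sum_eq_zero_iff_of_nonneg (fun i _ => hμ0 i)).mp h.symm i (Finset.mem_univ i)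
        have h1 := hφK _ ⟨a₀, ha₀, rfl⟩
        rw [hφ_eq] at h1
        simp only [hall, mul_zero, Finset.sum_const_zero] at h1
        have h2 : (∑ j, c' * μ j) = 0 := by simp [hall]
        rw [h2] at hbase
        linarith
    have hbstarB : (∑ i, (μ i / ∑ j, μ j) • bi i) ∈ B := by
      refine hBcv.sum_mem (fun i _ => div_nonneg (hμ0 i) hσ0.le) ?_ (fun i _ => (i : ↥B).2)
      rw [← Finset.sum_div, div_self hσ0.ne']
    have hlt : ∀ a ∈ A, f a (∑ i, (μ i / ∑ j, μ j) • bi i) < c' := by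
      intro a ha
      have h1 : φ (Gmap a) < s := hφK _ ⟨a, ha, rfl⟩
      have hL : f a (∑ i, (μ i / ∑ j, μ j) • bi i)
          = ∑ i, (μ i / ∑ j, μ j) * f a (bi i) := by
        have h := map_sum (IsLinearMap.mk' _ (hf₂ a))
          (fun i => (μ i / ∑ j, μ j) • bi i) Finset.univ
        simp only [map_smul, smul_eq_mul] at h
        exact h
      have h2 : φ (Gmap a) = ∑ i, f a (bi i) * μ i := by
        rw [hφ_eq]
        exact Finset.sum_congr rfl fun i _ => by rw [hGapp]
      have h3 : ∑ i, (μ i / ∑ j, μ j) * f a (bi i)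
          = (∑ i, f a (bi i) * μ i) / (∑ j, μ j) := by
        rw [Finset.sum_div]
        exact Finset.sum_congr rfl fun i _ => by ring
      have h5 : (∑ j, c' * μ j) = c' * ∑ j, μ j := by rw [Finset.mul_sum]
      have h6 : ∑ i, f a (bi i) * μ i < s := by rw [← h2]; exact h1
      rw [hL, h3, div_lt_iff₀ hσ0]
      nlinarith
    have hΨb : Ψ (∑ i, (μ i / ∑ j, μ j) • bi i) ≤ c' := by
      apply csSup_le (hAne'.image _)
      rintro _ ⟨a, ha, rfl⟩
      exact (hlt a ha).le
    have hfin : sInf (Ψ '' B) ≤ Ψ (∑ i, (μ i / ∑ j, μ j) • bi i) :=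
      csInf_le hbddB ⟨_, hbstarB, rfl⟩
    linarith
  obtain ⟨a, haA, ha2⟩ := key
  rw [Set.mem_iInter] at ha2
  have hΦa : c' ≤ Φ a := by
    apply le_csInf (hBne'.image _)
    rintro _ ⟨b, hb, rfl⟩
    exact ha2 ⟨b, hb⟩
  calc c < c' := hc1
    _ ≤ Φ a := hΦa
    _ ≤ sSup (Φ '' A) := le_csSup hbddA ⟨a, haA, rfl⟩
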